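/- arXiv:2407.18578 — 2 statements merged into one kernel-verified Lean document; each statement's English description precedes it below -/
import Mathlib

section
/- Let μ₁, ..., μ_r ∈ ℕ^t be pairwise linearly independent over ℚ, with {μ₁, ..., μ_s} a minimal generating set of the convex cone C spanned by μ₁, ..., μ_r. Let C° be the convex cone spanned by μ₂, ..., μ_r. Then for any λ ∈ ℕ^t and any finite set Γ ⊂ ℕ^t, the intersection (λ + ℕ·μ₁) ∩ (Γ + C°) is finite. -/
open Finset

/-- The natural inclusion of `ℕ^t` into `ℝ^t`. -/
def toR {t : ℕ} (x : Fin t → ℕ) : Fin t → ℝ := fun i => (x i : ℝ)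

/-- The natural inclusion of `ℕ^t` into `ℚ^t`. -/
def toQ {t : ℕ} (x : Fin t → ℕ) : Fin t → ℚ := fun i => (x i : ℚ)

/-- The convex cone spanned by the vectors `μ i` for `i` in the index set `I`. -/
def coneOf {t r : ℕ} (μ : Fin r → Fin t → ℕ) (I : Set (Fin r)) : Set (Fin t → ℝ) :=
  {x | ∃ a : Fin r → ℝ, (∀ i, 0 ≤ a i) ∧ (∀ i, i ∉ I → a i = 0) ∧ x = ∑ i, a i • toR (μ i)}

/-- The vectors `μ 1, ..., μ r` are pairwise linearly independent over `ℚ`. -/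
def PairwiseQIndep {t r : ℕ} (μ : Fin r → Fin t → ℕ) : Prop :=
  ∀ i j, i ≠ j → ∀ a b : ℚ, a • toQ (μ i) + b • toQ (μ j) = 0 → a = 0 ∧ b = 0

/-- `{μ 0, ..., μ (s-1)}` is a minimal generating set of the convex cone spanned by all of
`μ 0, ..., μ (r-1)`. -/
def IsMinimalBasis {t r : ℕ} (μ : Fin r → Fin t → ℕ) (s : ℕ) : Prop :=
  coneOf μ {i | (i : ℕ) < s} = coneOf μ Set.univ ∧
    ∀ I : Set (Fin r), I ⊂ {i | (i : ℕ) < s} → coneOf μ I ≠ coneOf μ Set.univ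

section aux
variable {t r : ℕ} (μ : Fin r → Fin t → ℕ) {I J : Set (Fin r)}

lemma zero_mem_coneOf : (0 : Fin t → ℝ) ∈ coneOf μ I :=
  ⟨0, fun _ => le_refl _, fun _ _ => rfl, by simp⟩

lemma add_mem_coneOf {x y} (hx : x ∈ coneOf μ I) (hy : y ∈ coneOf μ I) :
    x + y ∈ coneOf μ I := by
  obtain ⟨a, ha0, haI, has⟩ := hx
  obtain ⟨b, hb0, hbI, hbs⟩ := hy
  refine ⟨a + b, fun i => add_nonneg (ha0 i) (hb0 i),
    fun i hi => by simp [haI i hi, hbI i hi], ?_⟩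
  rw [has, hbs, ← Finset.sum_add_distrib]
  simp [add_smul]

lemma smul_mem_coneOf {x : Fin t → ℝ} {c : ℝ} (hc : 0 ≤ c) (hx : x ∈ coneOf μ I) :
    c • x ∈ coneOf μ I := by
  obtain ⟨a, ha0, haI, has⟩ := hx
  refine ⟨fun i => c * a i, fun i => mul_nonneg hc (ha0 i),
    fun i hi => by simp only []; rw [haI i hi, mul_zero], ?_⟩
  rw [has, Finset.smul_sum]
  simp [smul_smul]

lemma gen_mem_coneOf {i} (hi : i ∈ I) : toR (μ i) ∈ coneOf μ I := by
  refine ⟨fun j => if j = i then 1 else 0, fun j => by positivity,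
    fun j hj => by simp; rintro rfl; exact absurd hi hj, ?_⟩
  simp [ite_smul]

lemma sum_mem_coneOf {a : Fin r → ℝ} (h0 : ∀ i, 0 ≤ a i)
    (h : ∀ i, a i ≠ 0 → toR (μ i) ∈ coneOf μ I) :
    ∑ i, a i • toR (μ i) ∈ coneOf μ I := by
  refine Finset.sum_induction _ (· ∈ coneOf μ I)
    (fun x y hx hy => add_mem_coneOf μ hx hy) (zero_mem_coneOf μ) ?_
  intro i _
  by_cases hi : a i = 0
  · simpa [hi] using zero_mem_coneOf μ (I := I)
  · exact smul_mem_coneOf μ (h0 i) (h i hi)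

lemma coneOf_mono (hIJ : I ⊆ J) : coneOf μ I ⊆ coneOf μ J := by
  rintro x ⟨a, h0, hI, hs⟩
  exact ⟨a, h0, fun i hi => hI i (fun h => hi (hIJ h)), hs⟩

lemma coneOf_coord_nonneg {x} (hx : x ∈ coneOf μ I) (p : Fin t) : 0 ≤ x p := by
  obtain ⟨a, h0, _, hs⟩ := hx
  rw [hs]
  simp only [Finset.sum_apply, Pi.smul_apply, smul_eq_mul]
  exact Finset.sum_nonneg fun i _ => mul_nonneg (h0 i) (Nat.cast_nonneg _)
end aux

lemma lemA {t r : ℕ} (hr : 1 ≤ r) (μ : Fin r → Fin t → ℕ)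
    (hindep : PairwiseQIndep μ) (hne : ∀ i, μ i ≠ 0)
    (s : ℕ) (hs1 : 1 ≤ s) (hbasis : IsMinimalBasis μ s) :
    toR (μ ⟨0, hr⟩) ∉ coneOf μ {i | i ≠ ⟨0, hr⟩} := by
  set z : Fin r := ⟨0, hr⟩ with hz
  rintro ⟨a, ha0, haI, hasum⟩
  have haz : a z = 0 := haI z (by simp)
  -- representation of each generator in terms of the first s ones
  have key : ∀ j : Fin r, ∃ d : Fin r → ℝ, (∀ i, 0 ≤ d i) ∧ (∀ i : Fin r, s ≤ (i : ℕ) → d i = 0) ∧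
      toR (μ j) = ∑ i, d i • toR (μ i) ∧ (s ≤ (j : ℕ) ∨ (∀ i, i ≠ j → d i = 0)) := by
    intro j
    by_cases hj : s ≤ (j : ℕ)
    · have hmem : toR (μ j) ∈ coneOf μ {i : Fin r | (i : ℕ) < s} := by
        rw [hbasis.1]; exact gen_mem_coneOf μ (Set.mem_univ j)
      obtain ⟨d, hd0, hdI, hds⟩ := hmem
      exact ⟨d, hd0, fun i hi => hdI i (by simpa using Nat.not_lt.2 hi), hds, Or.inl hj⟩
    · refine ⟨fun i => if i = j then 1 else 0, fun i => by positivity, ?_, ?_, Or.inr ?_⟩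
      · intro i hi
        simp only [ite_eq_right_iff]
        rintro rfl; exact absurd hi hj
      · simp [ite_smul]
      · intro i hij; simp [hij]
  choose d hd0 hds hdsum hdcase using key
  set e : Fin r → ℝ := fun i => ∑ j, a j * d j i with he
  have he0 : ∀ i, 0 ≤ e i := fun i => Finset.sum_nonneg fun j _ => mul_nonneg (ha0 j) (hd0 j i)
  have hes : ∀ i : Fin r, s ≤ (i : ℕ) → e i = 0 := fun i hi =>
    Finset.sum_eq_zero fun j _ => by rw [hds j i hi, mul_zero]
  have hesum : toR (μ z) = ∑ i, e i • toR (μ i) := by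
    calc toR (μ z) = ∑ j, a j • toR (μ j) := hasum
      _ = ∑ j, a j • ∑ i, d j i • toR (μ i) := by
          exact Finset.sum_congr rfl fun j _ => by rw [← hdsum j]
      _ = ∑ j, ∑ i, (a j * d j i) • toR (μ i) := by
          exact Finset.sum_congr rfl fun j _ => by rw [Finset.smul_sum]; simp [smul_smul]
      _ = ∑ i, ∑ j, (a j * d j i) • toR (μ i) := Finset.sum_comm
      _ = ∑ i, e i • toR (μ i) := Finset.sum_congr rfl fun i _ => by
          rw [he]; simp [Finset.sum_smul]
  -- split off the z term
  have hsplit : (1 - e z) • toR (μ z) = ∑ i, (if i = z then 0 else e i) • toR (μ i) := by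
    have h2 : ∑ i, (if i = z then 0 else e i) • toR (μ i)
        = (∑ i, e i • toR (μ i)) - e z • toR (μ z) := by
      rw [eq_sub_iff_add_eq]
      calc ∑ i, (if i = z then 0 else e i) • toR (μ i) + e z • toR (μ z)
          = ∑ i, (if i = z then 0 else e i) • toR (μ i)
            + ∑ i, (if i = z then e i • toR (μ i) else 0) := by
            rw [Finset.sum_ite_eq' Finset.univ z]; simp
        _ = ∑ i, ((if i = z then 0 else e i) • toR (μ i)
            + if i = z then e i • toR (μ i) else 0) := (Finset.sum_add_distrib).symm
        _ = ∑ i, e i • toR (μ i) := Finset.sum_congr rfl fun i _ => by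
            by_cases h : i = z <;> simp [h]
    rw [sub_smul, one_smul, h2, ← hesum]
  by_cases hb : e z < 1
  -- case b₀ < 1 : μ z is in the cone of {i < s, i ≠ z}
  · have hpos : 0 < 1 - e z := by linarith
    have hmemI : toR (μ z) ∈ coneOf μ {i : Fin r | (i : ℕ) < s ∧ i ≠ z} := by
      refine ⟨fun i => (1 - e z)⁻¹ * (if i = z then 0 else e i), ?_, ?_, ?_⟩
      · intro i
        show 0 ≤ (1 - e z)⁻¹ * (if i = z then 0 else e i)
        refine mul_nonneg (by positivity) ?_
        by_cases h : i = z <;> simp [h, he0]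
      · intro i hi
        show (1 - e z)⁻¹ * (if i = z then 0 else e i) = 0
        by_cases h : i = z
        · rw [if_pos h, mul_zero]
        · rw [if_neg h]
          simp only [Set.mem_setOf_eq, not_and_or] at hi
          rcases hi with hi | hi
          · rw [hes i (Nat.not_lt.1 hi), mul_zero]
          · push_neg at hi; exact absurd hi h
      · have : toR (μ z) = (1 - e z)⁻¹ • ((1 - e z) • toR (μ z)) := by
          rw [smul_smul, inv_mul_cancel₀ (ne_of_gt hpos), one_smul]
        rw [this, hsplit, Finset.smul_sum]
        exact Finset.sum_congr rfl fun i _ => by rw [smul_smul]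
    have hIsub : {i : Fin r | (i : ℕ) < s ∧ i ≠ z} ⊂ {i : Fin r | (i : ℕ) < s} := by
      constructor
      · intro i hi; exact hi.1
      · intro h
        have hzmem : z ∈ {i : Fin r | (i : ℕ) < s} := by simpa [hz] using (Nat.lt_of_lt_of_le Nat.zero_lt_one hs1)
        have := h hzmem
        simp at this
    refine hbasis.2 _ hIsub ?_
    apply Set.Subset.antisymm (coneOf_mono μ (Set.subset_univ _))
    rw [← hbasis.1]
    rintro x ⟨g, hg0, hgI, hgs⟩
    rw [hgs]
    refine sum_mem_coneOf μ hg0 fun i hgi => ?_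
    by_cases h : i = z
    · rw [h]; exact hmemI
    · refine gen_mem_coneOf μ ?_
      refine ⟨?_, h⟩
      by_contra hlt
      exact hgi (hgI i hlt)
  -- case b₀ ≥ 1
  · push_neg at hb
    -- coordinatewise everything vanishes
    have hcoordsum : ∀ p, ∑ i, (if i = z then 0 else e i) * (μ i p : ℝ) = (1 - e z) * (μ z p : ℝ) := by
      intro p
      have h := congrFun hsplit p
      rw [Finset.sum_apply] at h
      simp only [Pi.smul_apply, smul_eq_mul, toR] at h
      exact h.symm
    have hterm0 : ∀ p, ∀ i, i ≠ z → e i * (μ i p : ℝ) = 0 := by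
      intro p i hi
      have hsum0 : ∑ i, (if i = z then 0 else e i) * (μ i p : ℝ) = 0 := by
        have hle : ∑ i, (if i = z then 0 else e i) * (μ i p : ℝ) ≤ 0 := by
          rw [hcoordsum p]
          apply mul_nonpos_of_nonpos_of_nonneg
          · linarith
          · positivity
        have hge : 0 ≤ ∑ i, (if i = z then 0 else e i) * (μ i p : ℝ) :=
          Finset.sum_nonneg fun i _ => mul_nonneg (by by_cases h : i = z <;> simp [h, he0]) (by positivity)
        linarith
      have := (Finset.sum_eq_zero_iff_of_nonneg
        (fun i _ => mul_nonneg (by by_cases h : i = z <;> simp [h, he0]) (by positivity : (0:ℝ) ≤ (μ i p : ℝ)))).1 hsum0 i (Finset.mem_univ i)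
      simpa [hi] using this
    have hei0 : ∀ i, i ≠ z → e i = 0 := by
      intro i hi
      obtain ⟨p, hp⟩ : ∃ p, μ i p ≠ 0 := by
        by_contra h
        push_neg at h
        exact hne i (funext h)
      have := hterm0 p i hi
      have hp' : (μ i p : ℝ) ≠ 0 := Nat.cast_ne_zero.2 hp
      exact (mul_eq_zero.1 this).resolve_right hp'
    have hez1 : e z = 1 := by
      obtain ⟨p, hp⟩ : ∃ p, μ z p ≠ 0 := by
        by_contra h
        push_neg at h
        exact hne z (funext h)
      have h0 : (1 - e z) * (μ z p : ℝ) = 0 := by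
        rw [← hcoordsum p]
        exact Finset.sum_eq_zero fun i _ => by
          by_cases h : i = z
          · simp [h]
          · simp [h, hterm0 p i h]
      have hp' : (μ z p : ℝ) ≠ 0 := Nat.cast_ne_zero.2 hp
      have := (mul_eq_zero.1 h0).resolve_right hp'
      linarith
    -- find j with a j * d j z > 0
    have hsum1 : ∑ j, a j * d j z = 1 := by simpa [he] using hez1
    obtain ⟨j, -, hj⟩ : ∃ j ∈ Finset.univ, a j * d j z ≠ 0 :=
      Finset.exists_ne_zero_of_sum_ne_zero (by rw [hsum1]; norm_num)
    have haj : 0 < a j := lt_of_le_of_ne (ha0 j) (by rintro h; exact hj (by rw [← h, zero_mul]))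
    have hdj : 0 < d j z := by
      rcases lt_or_eq_of_le (hd0 j z) with h | h
      · exact h
      · exact absurd (by rw [← h, mul_zero]) hj
    have hjz : j ≠ z := by rintro rfl; rw [haz, zero_mul] at hj; exact hj rfl
    have hjs : s ≤ (j : ℕ) := by
      rcases hdcase j with h | h
      · exact h
      · exact absurd (h z (Ne.symm hjz)) (ne_of_gt hdj)
    -- μ j = d j z • μ z
    have hdjsingle : ∀ i, i ≠ z → d j i = 0 := by
      intro i hi
      by_cases his : s ≤ (i : ℕ)
      · exact hds j i his
      · have : e i = 0 := hei0 i hi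
        have hall := (Finset.sum_eq_zero_iff_of_nonneg
          (fun j' (_ : j' ∈ Finset.univ) => mul_nonneg (ha0 j') (hd0 j' i))).1 (by simpa [he] using this) j (Finset.mem_univ j)
        rcases mul_eq_zero.1 hall with h | h
        · exact absurd h (ne_of_gt haj)
        · exact h
    have hmuj : ∀ p, (μ j p : ℝ) = d j z * (μ z p : ℝ) := by
      intro p
      have := congrFun (hdsum j) p
      simp only [Finset.sum_apply, Pi.smul_apply, smul_eq_mul, toR] at this
      rw [this, Finset.sum_eq_single z]
      · intro i _ hi
        rw [hdjsingle i hi, zero_mul]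
      · intro h; exact absurd (Finset.mem_univ z) h
    -- rational contradiction
    obtain ⟨p₀, hp₀⟩ : ∃ p, μ z p ≠ 0 := by
      by_contra h; push_neg at h; exact hne z (funext h)
    have hnat : ∀ p, μ j p * μ z p₀ = μ j p₀ * μ z p := by
      intro p
      have : ((μ j p * μ z p₀ : ℕ) : ℝ) = ((μ j p₀ * μ z p : ℕ) : ℝ) := by
        push_cast
        rw [hmuj p, hmuj p₀]
        ring
      exact_mod_cast this
    have hqeq : ((μ z p₀ : ℚ)) • toQ (μ j) + (-(μ j p₀ : ℚ)) • toQ (μ z) = 0 := by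
      funext p
      simp only [Pi.add_apply, Pi.smul_apply, smul_eq_mul, toQ, Pi.zero_apply, neg_mul]
      have := hnat p
      have : ((μ j p * μ z p₀ : ℕ) : ℚ) = ((μ j p₀ * μ z p : ℕ) : ℚ) := by exact_mod_cast this
      push_cast at this
      linarith
    have := (hindep j z hjz _ _ hqeq).1
    exact hp₀ (by exact_mod_cast this)

lemma lemB {t r : ℕ} (hr : 1 ≤ r) (μ : Fin r → Fin t → ℕ) (hne : ∀ i, μ i ≠ 0)
    (hnotin : toR (μ ⟨0, hr⟩) ∉ coneOf μ {i | i ≠ ⟨0, hr⟩}) (v : Fin t → ℝ) :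
    {k : ℕ | v + (k : ℝ) • toR (μ ⟨0, hr⟩) ∈ coneOf μ {i | i ≠ ⟨0, hr⟩}}.Finite := by
  set z : Fin r := ⟨0, hr⟩ with hz
  by_contra hK
  rw [← Set.not_infinite, not_not] at hK
  -- choose unbounded elements of K
  have hch : ∀ n : ℕ, ∃ k, k ∈ {k : ℕ | v + (k : ℝ) • toR (μ z) ∈ coneOf μ {i | i ≠ z}} ∧ n < k :=
    fun n => hK.exists_gt n
  choose k hkK hkn using hch
  choose a ha0 haI hasum using hkK
  -- the linear functional F x = ∑ p, x p
  have hF1 : ∀ i : Fin r, (1 : ℝ) ≤ ∑ p, toR (μ i) p := by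
    intro i
    have h1 : 1 ≤ ∑ p, μ i p := by
      rcases Nat.eq_zero_or_pos (∑ p, μ i p) with h | h
      · exfalso
        apply hne i
        funext p
        exact (Finset.sum_eq_zero_iff).1 h p (Finset.mem_univ p)
      · exact h
    calc (1:ℝ) ≤ ((∑ p, μ i p : ℕ) : ℝ) := by exact_mod_cast h1
      _ = ∑ p, toR (μ i) p := by push_cast [toR]; rfl
  have hkpos : ∀ n, (0:ℝ) < (k n : ℝ) := fun n => by
    have : 0 < k n := Nat.lt_of_le_of_lt (Nat.zero_le n) (hkn n)
    exact_mod_cast this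
  have hk1 : ∀ n, (1:ℝ) ≤ (k n : ℝ) := fun n => by
    have : 1 ≤ k n := Nat.lt_of_le_of_lt (Nat.zero_le n) (hkn n)
    exact_mod_cast this
  -- F applied to the sum
  have hFsum : ∀ n, (∑ p, v p) + (k n : ℝ) * (∑ p, toR (μ z) p) = ∑ i, a n i * ∑ p, toR (μ i) p := by
    intro n
    have h := congrArg (fun x : Fin t → ℝ => ∑ p, x p) (hasum n)
    simp only [Pi.add_apply, Pi.smul_apply, smul_eq_mul, Finset.sum_add_distrib,
      ← Finset.mul_sum, Finset.sum_apply] at h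
    rw [h, Finset.sum_comm]
    exact Finset.sum_congr rfl fun i _ => by rw [← Finset.mul_sum]
  -- bound on coefficients
  set M : ℝ := |∑ p, v p| + ∑ p, toR (μ z) p with hM
  set b : ℕ → Fin r → ℝ := fun n i => (k n : ℝ)⁻¹ * a n i with hb
  have hbmem : ∀ n, b n ∈ Set.pi Set.univ (fun _ : Fin r => Set.Icc (0:ℝ) M) := by
    intro n i _
    constructor
    · exact mul_nonneg (le_of_lt (inv_pos.2 (hkpos n))) (ha0 n i)
    · have hai : a n i ≤ (∑ p, v p) + (k n : ℝ) * (∑ p, toR (μ z) p) := by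
        rw [hFsum n]
        calc a n i = a n i * 1 := (mul_one _).symm
          _ ≤ a n i * ∑ p, toR (μ i) p :=
              mul_le_mul_of_nonneg_left (hF1 i) (ha0 n i)
          _ ≤ ∑ i', a n i' * ∑ p, toR (μ i') p :=
              Finset.single_le_sum (f := fun i' => a n i' * ∑ p, toR (μ i') p)
                (fun i' _ => mul_nonneg (ha0 n i') (le_trans zero_le_one (hF1 i')))
                (Finset.mem_univ i)
      have : (k n : ℝ)⁻¹ * a n i ≤ (k n : ℝ)⁻¹ * ((∑ p, v p) + (k n : ℝ) * (∑ p, toR (μ z) p)) :=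
        mul_le_mul_of_nonneg_left hai (le_of_lt (inv_pos.2 (hkpos n)))
      refine le_trans this ?_
      rw [mul_add, ← mul_assoc, inv_mul_cancel₀ (ne_of_gt (hkpos n)), one_mul, hM]
      gcongr
      calc (k n : ℝ)⁻¹ * (∑ p, v p) ≤ |(k n : ℝ)⁻¹ * (∑ p, v p)| := le_abs_self _
        _ = (k n : ℝ)⁻¹ * |∑ p, v p| := by
            rw [abs_mul, abs_of_pos (inv_pos.2 (hkpos n))]
        _ ≤ 1 * |∑ p, v p| := by
            refine mul_le_mul_of_nonneg_right ?_ (abs_nonneg _)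
            rw [inv_le_one_iff₀]
            right; exact hk1 n
        _ = |∑ p, v p| := one_mul _
  -- compactness
  have hcomp : IsCompact (Set.pi Set.univ (fun _ : Fin r => Set.Icc (0:ℝ) M)) :=
    isCompact_univ_pi fun _ => isCompact_Icc
  obtain ⟨L, hL, φ, hφ, hconv⟩ := hcomp.tendsto_subseq hbmem
  -- the rescaled equation
  have heqn : ∀ n, (k n : ℝ)⁻¹ • v + toR (μ z) = ∑ i, b n i • toR (μ i) := by
    intro n
    have h2 : (k n : ℝ)⁻¹ • (v + (k n : ℝ) • toR (μ z)) = ∑ i, b n i • toR (μ i) := by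
      rw [hasum n, Finset.smul_sum]
      exact Finset.sum_congr rfl fun i _ => by rw [smul_smul]
    rw [← h2, smul_add, smul_smul, inv_mul_cancel₀ (ne_of_gt (hkpos n)), one_smul]
  -- limits
  have hklim : Filter.Tendsto (fun m => ((k (φ m) : ℝ))) Filter.atTop Filter.atTop := by
    refine Filter.tendsto_atTop.2 fun C => ?_
    obtain ⟨N, hN⟩ := exists_nat_ge C
    refine Filter.eventually_atTop.2 ⟨N, fun m hm => ?_⟩
    have h1 : N ≤ k (φ m) := le_of_lt (lt_of_le_of_lt (le_trans hm hφ.le_apply) (hkn (φ m)))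
    calc C ≤ (N : ℝ) := hN
      _ ≤ (k (φ m) : ℝ) := by exact_mod_cast h1
  have hinvlim : Filter.Tendsto (fun m => ((k (φ m) : ℝ))⁻¹) Filter.atTop (nhds 0) :=
    hklim.inv_tendsto_atTop
  have hLHS : Filter.Tendsto (fun m => ((k (φ m) : ℝ))⁻¹ • v + toR (μ z))
      Filter.atTop (nhds (toR (μ z))) := by
    have : Filter.Tendsto (fun m => ((k (φ m) : ℝ))⁻¹ • v) Filter.atTop (nhds ((0:ℝ) • v)) :=
      hinvlim.smul_const v
    simpa using this.add_const (toR (μ z))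
  have hRHS : Filter.Tendsto (fun m => ∑ i, b (φ m) i • toR (μ i))
      Filter.atTop (nhds (∑ i, L i • toR (μ i))) := by
    refine tendsto_finset_sum _ fun i _ => ?_
    have hbi : Filter.Tendsto (fun m => b (φ m) i) Filter.atTop (nhds (L i)) :=
      ((continuous_apply i).tendsto L).comp hconv
    exact hbi.smul_const (toR (μ i))
  have hlim : toR (μ z) = ∑ i, L i • toR (μ i) := by
    refine tendsto_nhds_unique ?_ hRHS
    have : (fun m => ((k (φ m) : ℝ))⁻¹ • v + toR (μ z)) = fun m => ∑ i, b (φ m) i • toR (μ i) :=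
      funext fun m => heqn (φ m)
    rw [← this]
    exact hLHS
  -- contradiction
  apply hnotin
  refine ⟨L, fun i => (hL i (Set.mem_univ i)).1, ?_, hlim⟩
  intro i hi
  simp only [Set.mem_setOf_eq, not_not] at hi
  have hai0 : ∀ m, a (φ m) i = 0 := fun m => haI (φ m) i (by simp [hi])
  have hb0 : ∀ m, b (φ m) i = 0 := fun m => by
    show (k (φ m) : ℝ)⁻¹ * a (φ m) i = 0
    rw [hai0, mul_zero]
  have h1 : Filter.Tendsto (fun m => b (φ m) i) Filter.atTop (nhds (L i)) :=
    ((continuous_apply i).tendsto L).comp hconv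
  have h0 : Filter.Tendsto (fun m => b (φ m) i) Filter.atTop (nhds 0) := by
    have heq : (fun m => b (φ m) i) = fun _ => (0:ℝ) := funext hb0
    rw [heq]
    exact tendsto_const_nhds
  exact tendsto_nhds_unique h1 h0


theorem stmt2 {t r : ℕ} (hr : 1 ≤ r) (μ : Fin r → Fin t → ℕ)
    (hindep : PairwiseQIndep μ) (s : ℕ) (hs1 : 1 ≤ s) (hsr : s ≤ r)
    (hbasis : IsMinimalBasis μ s) (lam : Fin t → ℕ) (Γ : Finset (Fin t → ℕ)) :
    ({x : Fin t → ℝ | ∃ k : ℕ, x = toR lam + (k : ℝ) • toR (μ ⟨0, hr⟩)} ∩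
      {x | ∃ γ ∈ Γ, ∃ c ∈ coneOf μ {i | i ≠ ⟨0, hr⟩}, x = toR γ + c}).Finite := by
  rcases Nat.lt_or_ge r 2 with hr2 | hr2
  · -- r = 1 : the cone is {0}
    have hcone : ∀ c ∈ coneOf μ {i | i ≠ ⟨0, hr⟩}, c = 0 := by
      rintro c ⟨a, ha0, haI, hs⟩
      have hall : ∀ i : Fin r, a i = 0 := by
        intro i
        apply haI
        simp only [Set.mem_setOf_eq, not_not]
        have hilt := i.isLt
        exact Fin.ext (by omega)
      rw [hs]
      exact Finset.sum_eq_zero fun i _ => by rw [hall i, zero_smul]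
    apply Set.Finite.subset (Γ.finite_toSet.image toR)
    rintro x ⟨-, ⟨γ, hγ, c, hc, hx⟩⟩
    exact ⟨γ, hγ, by rw [hx, hcone c hc, add_zero]⟩
  · -- r ≥ 2 : every μ i is nonzero
    have hne : ∀ i, μ i ≠ 0 := by
      intro i h0
      have hex : ∃ j : Fin r, j ≠ i := by
        by_cases h : (i : ℕ) = 0
        · exact ⟨⟨1, by omega⟩, Fin.ne_of_val_ne (by simp [h])⟩
        · exact ⟨⟨0, by omega⟩, Fin.ne_of_val_ne (by simpa using fun hh => h hh.symm)⟩
      obtain ⟨j, hj⟩ := hex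
      have hQ : (1 : ℚ) • toQ (μ i) + (0 : ℚ) • toQ (μ j) = 0 := by
        funext p
        simp [toQ, congrFun h0 p]
      exact one_ne_zero (hindep i j (Ne.symm hj) 1 0 hQ).1
    have hnotin := lemA hr μ hindep hne s hs1 hbasis
    apply Set.Finite.subset (Set.Finite.biUnion Γ.finite_toSet
      (fun γ _ => ((lemB hr μ hne hnotin (toR lam - toR γ)).image
        (fun k : ℕ => toR lam + (k : ℝ) • toR (μ ⟨0, hr⟩)))))
    rintro x ⟨⟨k, hk⟩, ⟨γ, hγ, c, hc, hx⟩⟩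
    refine Set.mem_biUnion hγ ⟨k, ?_, hk.symm⟩
    show toR lam - toR γ + (k : ℝ) • toR (μ ⟨0, hr⟩) ∈ coneOf μ {i | i ≠ ⟨0, hr⟩}
    have hceq : toR lam - toR γ + (k : ℝ) • toR (μ ⟨0, hr⟩) = c := by
      have h := hx.symm.trans hk
      funext p
      have hp := congrFun h p
      simp only [Pi.add_apply, Pi.sub_apply, Pi.smul_apply, smul_eq_mul] at *
      linarith
    rw [hceq]
    exact hc
end

section
/- Let α₁, ..., α_r be algebraic numbers with 0 < |α_i| < 1 for all i. Then there exist multiplicatively independent algebraic numbers β₁, ..., β_t with 0 < |β_j| < 1, roots of unity ζ₁, ..., ζ_r, and nonnegative integers μ_{i,j} such that α_i = ζ_i · ∏_{j=1}^t β_j^{μ_{i,j}} for every i. -/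
/-!
Send `z ≠ 0` to the class of `log z` in `ℂ ⧸ ℚ ∙ 2πi`: products go to sums, the kernel consists
of the roots of unity, and the real part `log ‖z‖` is `ℚ`-linear on the target. The images `w i`
of the `α i` therefore lie in the half-space `Re < 0` of a `ℚ`-vector space. A basis of their
span taken among the `w i`, suitably rescaled, spans a simplex which, dilated about its
barycentre, has generators `c j` still in the half-space and a cone containing every `w i`;
dividing the `c j` by a common denominator makes all coefficients natural numbers. Since
`ℚ`-combinations of logarithms of algebraic numbers are again such logarithms (roots of
products), each `c j` is the image of an algebraic `β j`, and `α i / ∏ j, β j ^ μ i j` lies in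
the kernel.
-/

open Finset

/-- The complex numbers `β 1, ..., β t` are multiplicatively independent: the only
integer tuple `n` with `∏ j, β j ^ n j = 1` is the zero tuple. -/
def MultIndepFamily {t : ℕ} (β : Fin t → ℂ) : Prop :=
  ∀ n : Fin t → ℤ, (∏ j, β j ^ n j) = 1 → n = 0

open Submodule Filter Topology Complex

section ExpandFamily

variable {K V ι : Type*} [Field K] [AddCommGroup V] [Module K V] [Fintype ι]

/-- Up to positive scaling, the vertices of the simplex spanned by `e`, dilated by the factor
`1 + κ * Fintype.card ι` about its barycentre. -/
def expandFamily (κ : K) (e : ι → V) : ι → V :=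
  fun j => e j - (κ / (1 + κ * Fintype.card ι)) • ∑ k, e k

lemma sum_smul_expandFamily {κ : K} (hκ : 1 + κ * Fintype.card ι ≠ 0) (e : ι → V)
    (Q : ι → K) : ∑ j, (Q j + κ * ∑ k, Q k) • expandFamily κ e j = ∑ j, Q j • e j := by
  have hcoef : ∑ j, (Q j + κ * ∑ k, Q k) * (κ / (1 + κ * Fintype.card ι)) = κ * ∑ k, Q k := by
    rw [← sum_mul, sum_add_distrib, sum_const, card_univ, nsmul_eq_mul, div_eq_mul_inv]
    calc _ = κ * (∑ k, Q k) * ((1 + κ * Fintype.card ι) * (1 + κ * Fintype.card ι)⁻¹) := by ring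
      _ = _ := by rw [mul_inv_cancel₀ hκ, mul_one]
  simp only [expandFamily, smul_sub, sum_sub_distrib, smul_smul, ← sum_smul, hcoef, add_smul,
    sum_add_distrib, ← smul_sum]
  abel

lemma linearIndependent_expandFamily {κ : K} (hκ : 1 + κ * Fintype.card ι ≠ 0) {e : ι → V}
    (he : LinearIndependent K e) : LinearIndependent K (expandFamily κ e) := by
  rw [Fintype.linearIndependent_iff] at he ⊢
  intro g hg
  obtain ⟨s, hs, hs'⟩ : ∃ s, s = κ / (1 + κ * Fintype.card ι) ∧ s * (1 + κ * Fintype.card ι) = κ :=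
    ⟨_, rfl, div_mul_cancel₀ κ hκ⟩
  have hcoef : ∀ j, g j - s * ∑ k, g k = 0 := by
    refine he _ ?_
    rw [← hg]
    simp only [expandFamily, ← hs, smul_sub, sub_smul, sum_sub_distrib, smul_smul, ← sum_smul,
      ← smul_sum, mul_comm s, sum_mul]
  have hsum : ∑ k, g k = 0 := by
    have h := sum_eq_zero (s := univ) fun j _ => hcoef j
    rw [sum_sub_distrib, sum_const, card_univ, nsmul_eq_mul] at h
    have h1 : (1 - Fintype.card ι * s) * ∑ k, g k = 0 := by linear_combination h
    have h2 : (1 - Fintype.card ι * s) * (1 + κ * Fintype.card ι) = 1 := by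
      linear_combination (-(Fintype.card ι : K)) * hs'
    exact (mul_eq_zero.1 h1).resolve_left (left_ne_zero_of_mul_eq_one h2)
  intro j
  simpa [hsum] using hcoef j

end ExpandFamily

lemma exists_rat_rescaling {ι ι' : Type*} [Fintype ι] [Finite ι'] {a : ι → ℝ}
    (ha : ∀ k, a k < 0) (q : ι' → ι → ℝ) {κ s : ℝ} (hs : s * Fintype.card ι < 1)
    (hκ : ∀ i j, q i j * a j + κ * ∑ k, q i k * a k < 0) :
    ∃ r : ι → ℚ, (∀ k, r k ≠ 0) ∧ (∀ j, r j * a j - s * ∑ k, r k * a k < 0) ∧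
      ∀ i j, 0 < q i j / r j + κ * ∑ k, q i k / r k := by
  -- At `x₀ = -1 / a` every condition holds strictly, hence also at nearby rational points.
  set x₀ : ι → ℝ := fun k => -(a k)⁻¹
  have hx₀ : ∀ k, x₀ k ≠ 0 := fun k => by simp [x₀, (ha k).ne]
  have hx₀a : ∀ k, x₀ k * a k = -1 := fun k => by simp [x₀, (ha k).ne]
  have hdiv : ∀ i k, q i k / x₀ k = -(q i k * a k) := fun i k => by
    simp only [x₀, div_neg, div_inv_eq_mul]
  have key : ∀ᶠ x in 𝓝 x₀, (∀ k, x k ≠ 0) ∧ (∀ j, x j * a j - s * ∑ k, x k * a k < 0) ∧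
      ∀ i j, 0 < q i j / x j + κ * ∑ k, q i k / x k := by
    refine (eventually_all.2 fun k => ?_).and ((eventually_all.2 fun j => ?_).and
      (eventually_all.2 fun i => eventually_all.2 fun j => ?_))
    · exact (continuous_apply k).continuousAt.eventually_ne (hx₀ k)
    · refine ContinuousAt.eventually_lt (by fun_prop) continuousAt_const ?_
      simp only [hx₀a, sum_const, card_univ, nsmul_eq_mul]
      linarith
    · have hdivc : ∀ k, ContinuousAt (fun x : ι → ℝ => q i k / x k) x₀ := fun k =>
        continuousAt_const.div (continuous_apply k).continuousAt (hx₀ k)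
      refine ContinuousAt.eventually_lt continuousAt_const
        ((hdivc j).add (continuousAt_const.mul (tendsto_finsetSum _ fun k _ => hdivc k))) ?_
      simp only [hdiv, sum_neg_distrib]
      linarith [hκ i j]
  obtain ⟨r, hr⟩ := (DenseRange.piMap fun _ => Rat.denseRange_cast).mem_nhds key
  simp only [Set.mem_ofPred_eq, Pi.map_apply, Rat.cast_ne_zero] at hr
  exact ⟨r, hr⟩

lemma exists_nat_mul_eq_natCast {α : Type*} [Finite α] (f : α → ℚ) (hf : ∀ a, 0 ≤ f a) :
    ∃ E : ℕ, 0 < E ∧ ∀ a, ∃ n : ℕ, (E : ℚ) * f a = n := by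
  cases nonempty_fintype α
  refine ⟨∏ a, (f a).den, prod_pos fun a _ => (f a).den_pos, fun a => ?_⟩
  obtain ⟨m, hm⟩ := dvd_prod_of_mem (fun a => (f a).den) (mem_univ a)
  refine ⟨m * (f a).num.toNat, ?_⟩
  rw [hm, Nat.cast_mul, Nat.cast_mul, mul_comm ((f a).den : ℚ), mul_assoc, Rat.den_mul_eq_num]
  congr 1
  exact_mod_cast (Int.toNat_of_nonneg (Rat.num_nonneg.2 (hf a))).symm

section Cone

variable {V : Type*} [AddCommGroup V] [Module ℚ V] (L : V →ₗ[ℚ] ℝ)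

theorem exists_simplicial_cone {ι ι' : Type*} [Fintype ι] [Finite ι'] {e : ι → V}
    (he : LinearIndependent ℚ e) (hLe : ∀ k, L (e k) < 0) {w : ι' → V}
    (hw : ∀ i, w i ∈ span ℚ (Set.range e)) (hLw : ∀ i, L (w i) < 0) :
    ∃ c : ι → V, LinearIndependent ℚ c ∧ (∀ j, L (c j) < 0) ∧
      (∀ j, c j ∈ span ℚ (Set.range e)) ∧
      ∀ i, ∃ l : ι → ℚ, (∀ j, 0 ≤ l j) ∧ w i = ∑ j, l j • c j := by
  /- Once `L (r k • e k) ≈ -1`, the coordinate sum approximates `-L`, which is positive on every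
  `w i`; so a large enough dilation `κ` captures all `w i` while `L` stays negative on the
  generators. -/
  choose q hq using fun i => (mem_span_range_iff_exists_fun ℚ).1 (hw i)
  have hLq : ∀ i, ∑ k, (q i k : ℝ) * L (e k) = L (w i) := fun i => by
    simp [← hq i, Rat.smul_def]
  obtain ⟨M, hM⟩ := Finite.exists_le fun p : ι' × ι => q p.1 p.2 * L (e p.2) / -L (w p.1)
  obtain ⟨κ, hκ⟩ := exists_rat_gt (max M 0)
  have hκ0 : (0 : ℝ) ≤ κ := (le_max_right _ _).trans hκ.le
  have hκt : (0 : ℚ) < 1 + κ * Fintype.card ι := by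
    have : (0 : ℚ) ≤ κ := by exact_mod_cast hκ0
    positivity
  have hs : ((κ / (1 + κ * Fintype.card ι) : ℚ) : ℝ) * Fintype.card ι < 1 := by
    have h : κ / (1 + κ * Fintype.card ι) * Fintype.card ι < 1 := by
      rw [div_mul_eq_mul_div, div_lt_one hκt]
      linarith
    exact_mod_cast h
  have hqκ : ∀ i j, (q i j : ℝ) * L (e j) + κ * ∑ k, (q i k : ℝ) * L (e k) < 0 := by
    intro i j
    have h := (hM (i, j)).trans_lt ((le_max_left _ _).trans_lt hκ)
    rw [div_lt_iff₀ (neg_pos.2 (hLw i))] at h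
    rw [hLq]
    linarith
  obtain ⟨r, hr0, hrL, hrQ⟩ := exists_rat_rescaling hLe _ hs hqκ
  refine ⟨expandFamily κ fun k => r k • e k, ?_, fun j => ?_, fun j => ?_, fun i =>
    ⟨fun j => q i j / r j + κ * ∑ k, q i k / r k, fun j => by exact_mod_cast (hrQ i j).le, ?_⟩⟩
  · exact linearIndependent_expandFamily hκt.ne'
      (he.units_smul fun k => Units.mk0 (r k) (hr0 k))
  · simpa [expandFamily, Rat.smul_def, mul_comm] using hrL j
  · exact sub_mem (smul_mem _ _ (subset_span ⟨j, rfl⟩))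
      (smul_mem _ _ (sum_mem fun k _ => smul_mem _ _ (subset_span ⟨k, rfl⟩)))
  · rw [sum_smul_expandFamily hκt.ne', ← hq i]
    refine sum_congr rfl fun k _ => ?_
    rw [smul_smul, div_mul_cancel₀ _ (hr0 k)]

theorem exists_nat_cone {r : ℕ} (w : Fin r → V) (hw : ∀ i, L (w i) < 0) :
    ∃ (s : ℕ) (c : Fin s → V), LinearIndependent ℚ c ∧ (∀ j, L (c j) < 0) ∧
      (∀ j, c j ∈ span ℚ (Set.range w)) ∧ ∀ i, ∃ μ : Fin s → ℕ, w i = ∑ j, μ j • c j := by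
  obtain ⟨ι, a, ha, hspan, hli⟩ := exists_linearIndependent' ℚ w
  have : Finite ι := Finite.of_injective a ha
  set σ := (Finite.equivFin ι).symm
  have he : span ℚ (Set.range (w ∘ a ∘ σ)) = span ℚ (Set.range w) := by
    rw [← hspan, ← EquivLike.range_comp (w ∘ a) σ]
    rfl
  obtain ⟨c, hc, hLc, hcw, hl⟩ := exists_simplicial_cone L (hli.comp σ σ.injective)
    (fun k => hw _) (fun i => he ▸ subset_span ⟨i, rfl⟩) hw
  choose l hl0 hl using hl
  obtain ⟨E, hE, hEl⟩ := exists_nat_mul_eq_natCast (fun p : Fin r × Fin _ => l p.1 p.2)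
    fun p => hl0 _ _
  choose μ hμ using hEl
  have hE' : (0 : ℚ) < (E : ℚ)⁻¹ := by positivity
  refine ⟨_, fun j => (E : ℚ)⁻¹ • c j, ?_, fun j => ?_, fun j => ?_, fun i =>
    ⟨fun j => μ (i, j), ?_⟩⟩
  · exact hc.units_smul fun _ => Units.mk0 _ hE'.ne'
  · rw [map_smul, Rat.smul_def]
    exact mul_neg_of_pos_of_neg (by exact_mod_cast hE') (hLc j)
  · exact he ▸ smul_mem _ _ (hcw j)
  · rw [hl i]
    refine sum_congr rfl fun j _ => ?_
    rw [← Nat.cast_smul_eq_nsmul ℚ, smul_smul, ← hμ (i, j), mul_comm,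
      inv_mul_cancel_left₀ (by positivity)]

end Cone

/-- Dividing by `ℚ ∙ 2πi` rather than `ℤ ∙ 2πi` makes this a `ℚ`-vector space, and the kernel
of `logEmbedding` on `ℂˣ` is then exactly the roots of unity. -/
abbrev LogSpace : Type := ℂ ⧸ span ℚ {2 * (Real.pi : ℂ) * I}

noncomputable def logEmbedding (z : ℂ) : LogSpace := Submodule.Quotient.mk (log z)

noncomputable def logEmbeddingRe : LogSpace →ₗ[ℚ] ℝ :=
  (span ℚ {2 * (Real.pi : ℂ) * I}).liftQ (reLm.restrictScalars ℚ) (span_le.2 (by simp))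

lemma logEmbeddingRe_logEmbedding (z : ℂ) : logEmbeddingRe (logEmbedding z) = Real.log ‖z‖ :=
  log_re z

lemma logEmbedding_exp (x : ℂ) : logEmbedding (cexp x) = Submodule.Quotient.mk x := by
  obtain ⟨n, hn⟩ := exp_eq_exp_iff_exists_int.1 (exp_log (exp_ne_zero x))
  refine (Submodule.Quotient.eq _).2 (mem_span_singleton.2 ⟨n, ?_⟩)
  rw [hn, Rat.smul_def]
  push_cast
  ring

lemma logEmbedding_one : logEmbedding 1 = 0 := by
  simp [logEmbedding]

lemma logEmbedding_mul {z w : ℂ} (hz : z ≠ 0) (hw : w ≠ 0) :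
    logEmbedding (z * w) = logEmbedding z + logEmbedding w := by
  rw [← exp_log hz, ← exp_log hw, ← exp_add, logEmbedding_exp, logEmbedding_exp,
    logEmbedding_exp, Submodule.Quotient.mk_add]

lemma logEmbedding_prod_zpow {ι : Type*} [Fintype ι] {β : ι → ℂ} (hβ : ∀ j, β j ≠ 0)
    (n : ι → ℤ) : logEmbedding (∏ j, β j ^ n j) = ∑ j, n j • logEmbedding (β j) := by
  have h : ∏ j, β j ^ n j = cexp (∑ j, n j * log (β j)) := by
    simp only [exp_sum, exp_int_mul, exp_log (hβ _)]
  rw [h, logEmbedding_exp, ← mkQ_apply, map_sum]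
  simp [logEmbedding, ← zsmul_eq_mul]

lemma logEmbedding_prod_pow {ι : Type*} [Fintype ι] {β : ι → ℂ} (hβ : ∀ j, β j ≠ 0)
    (n : ι → ℕ) : logEmbedding (∏ j, β j ^ n j) = ∑ j, n j • logEmbedding (β j) := by
  simpa [zpow_natCast, natCast_zsmul] using logEmbedding_prod_zpow hβ fun j => (n j : ℤ)

lemma exists_pow_div_eq_one_of_logEmbedding_eq {z w : ℂ} (hz : z ≠ 0) (hw : w ≠ 0)
    (h : logEmbedding z = logEmbedding w) : ∃ n : ℕ, 0 < n ∧ (z / w) ^ n = 1 := by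
  obtain ⟨q, hq⟩ := mem_span_singleton.1 ((Submodule.Quotient.eq _).1 h)
  refine ⟨q.den, q.den_pos, ?_⟩
  rw [← exp_log hz, ← exp_log hw, ← exp_sub, ← exp_nat_mul, ← hq, Rat.smul_def, ← mul_assoc,
    ← Rat.cast_natCast, ← Rat.cast_mul, Rat.den_mul_eq_num, Rat.cast_intCast]
  exact exp_int_mul_two_pi_mul_I q.num

lemma isAlgebraic_zpow {K A : Type*} [Field K] [Field A] [Algebra K A] {z : A}
    (hz : IsAlgebraic K z) (n : ℤ) : IsAlgebraic K (z ^ n) := by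
  obtain ⟨n, rfl | rfl⟩ := n.eq_nat_or_neg
  · simpa using hz.pow n
  · simpa using (hz.pow n).inv

noncomputable def algebraicLogs : Submodule ℚ LogSpace where
  carrier := logEmbedding '' {z | z ≠ 0 ∧ IsAlgebraic ℚ z}
  add_mem' := by
    rintro _ _ ⟨z, ⟨hz, hza⟩, rfl⟩ ⟨w, ⟨hw, hwa⟩, rfl⟩
    exact ⟨z * w, ⟨mul_ne_zero hz hw, hza.mul hwa⟩, logEmbedding_mul hz hw⟩
  zero_mem' := ⟨1, ⟨one_ne_zero, isAlgebraic_one⟩, logEmbedding_one⟩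
  smul_mem' := by
    rintro q _ ⟨z, ⟨hz, hza⟩, rfl⟩
    refine ⟨cexp (q * log z), ⟨exp_ne_zero _, IsAlgebraic.of_pow q.den_pos ?_⟩, ?_⟩
    · rw [← exp_nat_mul, ← mul_assoc, ← Rat.cast_natCast, ← Rat.cast_mul, Rat.den_mul_eq_num,
        Rat.cast_intCast, exp_int_mul, exp_log hz]
      exact isAlgebraic_zpow hza _
    · rw [logEmbedding_exp, ← Rat.smul_def, Submodule.Quotient.mk_smul]
      rfl

lemma logEmbedding_mem_algebraicLogs {z : ℂ} (hz : z ≠ 0) (hza : IsAlgebraic ℚ z) :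
    logEmbedding z ∈ algebraicLogs :=
  ⟨z, ⟨hz, hza⟩, rfl⟩

lemma multIndepFamily_of_linearIndependent {t : ℕ} {β : Fin t → ℂ} (hβ : ∀ j, β j ≠ 0)
    (h : LinearIndependent ℚ (logEmbedding ∘ β)) : MultIndepFamily β := by
  intro n hn
  have h0 := logEmbedding_prod_zpow hβ n
  rw [hn, logEmbedding_one] at h0
  funext j
  exact Fintype.linearIndependent_iff.1 (h.restrict_scalars' ℤ) n h0.symm j

theorem stmt3 {r : ℕ} (α : Fin r → ℂ) (halg : ∀ i, IsAlgebraic ℚ (α i))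
    (habs : ∀ i, 0 < ‖α i‖ ∧ ‖α i‖ < 1) :
    ∃ (t : ℕ) (β : Fin t → ℂ),
      (∀ j, IsAlgebraic ℚ (β j)) ∧
      (∀ j, 0 < ‖β j‖ ∧ ‖β j‖ < 1) ∧
      MultIndepFamily β ∧
      ∃ ζ : Fin r → ℂ, (∀ i, ∃ n : ℕ, 0 < n ∧ ζ i ^ n = 1) ∧
        ∃ μ : Fin r → Fin t → ℕ, ∀ i, α i = ζ i * ∏ j, β j ^ μ i j := by
  have hα : ∀ i, α i ≠ 0 := fun i => norm_pos_iff.1 (habs i).1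
  obtain ⟨t, c, hc, hLc, hcα, hαc⟩ := exists_nat_cone logEmbeddingRe (logEmbedding ∘ α)
    fun i => by simpa [logEmbeddingRe_logEmbedding] using Real.log_neg (habs i).1 (habs i).2
  have hc_alg : ∀ j, c j ∈ algebraicLogs := fun j =>
    span_le.2 (Set.range_subset_iff.2 fun i => logEmbedding_mem_algebraicLogs (hα i) (halg i))
      (hcα j)
  choose β hβ hβc using hc_alg
  choose μ hμ using hαc
  have hP : ∀ i, ∏ j, β j ^ μ i j ≠ 0 := fun i =>
    prod_ne_zero_iff.2 fun j _ => pow_ne_zero _ (hβ j).1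
  refine ⟨t, β, fun j => (hβ j).2, fun j => ?_, ?_, fun i => α i / ∏ j, β j ^ μ i j,
    fun i => ?_, μ, fun i => (div_mul_cancel₀ _ (hP i)).symm⟩
  · have hlog : Real.log ‖β j‖ < 0 := by
      rw [← logEmbeddingRe_logEmbedding, hβc]
      exact hLc j
    have hpos : 0 < ‖β j‖ := norm_pos_iff.2 (hβ j).1
    exact ⟨hpos, (Real.log_neg_iff hpos).1 hlog⟩
  · refine multIndepFamily_of_linearIndependent (fun j => (hβ j).1) ?_
    rwa [show logEmbedding ∘ β = c from funext hβc]
  · refine exists_pow_div_eq_one_of_logEmbedding_eq (hα i) (hP i) ?_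
    rw [logEmbedding_prod_pow fun j => (hβ j).1]
    simpa [hβc] using hμ i
end
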